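/- For α ∈ (0,1], λ > 0, the function p ↦ p·Γ(1+α/2)·W(-p; -α/2, 1-α/2)/(1 - W(-p; -α/2, 1)) is continuous on (0, p_max) where p_max is the smallest positive zero of 1 - W(-p; -α/2, 1) (with p_max = +∞ if none exists); in the case α = 1 this reduces to continuity of p ↦ (p√π/2) e^{p²/4} erf(p/2) on (0,∞), which is strictly increasing, tends to 0 as p → 0⁺ and to ∞ as p → ∞, so for each λ > 0 the equation λ = (p√π/2) e^{p²/4} erf(p/2) has a unique positive solution p. -/

import Mathlib

open Filter Set

/-- The two-parameter Wright function with real parameters and argument. -/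
noncomputable def wrightR (γ δ z : ℝ) : ℝ :=
  ∑' k : ℕ, z ^ k / ((k.factorial : ℝ) * Real.Gamma (γ * k + δ))

/-- The error function `erf(x) = (2/√π) ∫₀ˣ e^{-t²} dt`. -/
noncomputable def erf (x : ℝ) : ℝ :=
  (2 / Real.sqrt Real.pi) * ∫ t in (0:ℝ)..x, Real.exp (-t ^ 2)
open Real Nat Topology

/-! For `-1/2 ≤ γ < 0` the reflection formula gives `|Γ(γk+δ)|⁻¹ ≤ Γ(1-γk-δ) ≤ Γ(k/2+2)` for large
`k`, and log-convexity of `Γ` gives `Γ(k/2+2)² ≤ Γ(2)Γ(k+2) = (k+1)!`. Hence the Wright series is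
dominated on bounded sets by a convergent series and `W(·; γ, δ)` is continuous on `ℝ`, which
makes the quotient continuous wherever its denominator does not vanish.

For `α = 1`, `G(p) = (p√π/2) e^{p²/4} erf(p/2)` is a product of nonnegative increasing factors,
vanishes at `0` and satisfies `G(p) ≥ G(1) p` for `p ≥ 1`; the intermediate value theorem and strict
monotonicity give exactly one positive solution of `λ = G(p)`. -/

namespace Real

theorem Gamma_midpoint_sq_le {s t : ℝ} (hs : 0 < s) (ht : 0 < t) :
    Gamma ((s + t) / 2) ^ 2 ≤ Gamma s * Gamma t := by
  have h := Gamma_mul_add_mul_le_rpow_Gamma_mul_rpow_Gamma hs ht (a := 1 / 2) (b := 1 / 2)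
    (by norm_num) (by norm_num) (by norm_num)
  rw [← sqrt_eq_rpow, ← sqrt_eq_rpow, ← sqrt_mul (Gamma_pos_of_pos hs).le,
    show 1 / 2 * s + 1 / 2 * t = (s + t) / 2 by ring] at h
  calc Gamma ((s + t) / 2) ^ 2 ≤ √(Gamma s * Gamma t) ^ 2 := by gcongr
    _ = Gamma s * Gamma t :=
        sq_sqrt (mul_nonneg (Gamma_pos_of_pos hs).le (Gamma_pos_of_pos ht).le)

theorem Gamma_half_add_two_sq_le_factorial (k : ℕ) : Gamma (k / 2 + 2) ^ 2 ≤ (k + 1)! := by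
  have h := Gamma_midpoint_sq_le two_pos (by positivity : (0 : ℝ) < k + 2)
  rwa [Gamma_two, one_mul, show ((k : ℝ) + 2) = (k + 1 : ℕ) + 1 by push_cast; ring,
    Gamma_nat_eq_factorial, show (2 + ((k + 1 : ℕ) + 1 : ℝ)) / 2 = k / 2 + 2 by push_cast; ring]
    at h

theorem inv_abs_Gamma_le {x : ℝ} (hx : x < 1) : |Gamma x|⁻¹ ≤ Gamma (1 - x) / π := by
  have hpos : 0 < Gamma (1 - x) := Gamma_pos_of_pos (by linarith)
  rcases eq_or_ne (Gamma x) 0 with h | h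
  · rw [h, abs_zero, inv_zero]
    positivity
  have hsin : sin (π * x) ≠ 0 := fun hsin ↦ by
    simpa [hsin, h, hpos.ne'] using Gamma_mul_Gamma_one_sub x
  have hrefl : |Gamma x| * Gamma (1 - x) = π / |sin (π * x)| := by
    rw [← abs_of_pos hpos, ← abs_mul, Gamma_mul_Gamma_one_sub, abs_div, abs_of_pos pi_pos]
  rw [le_div_iff₀ pi_pos, inv_mul_le_iff₀ (abs_pos.2 h), hrefl]
  exact le_div_self pi_pos.le (abs_pos.2 hsin) (abs_sin_le_one _)

theorem eventually_inv_abs_Gamma_mul_add_le {γ δ : ℝ} (hγ : -(1 / 2) ≤ γ) (hγ0 : γ < 0)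
    (hδ : -1 ≤ δ) : ∀ᶠ k : ℕ in atTop, |Gamma (γ * k + δ)|⁻¹ ≤ Gamma (k / 2 + 2) := by
  filter_upwards [eventually_ge_atTop ⌈(1 + δ) / -γ⌉₊] with k hk
  have hk' : 1 + δ ≤ -γ * k := by
    rw [← div_le_iff₀' (by linarith)]
    exact Nat.ceil_le.1 hk
  have hhalf : -γ * k ≤ k / 2 := by nlinarith [(Nat.cast_nonneg k : (0:ℝ) ≤ k)]
  calc |Gamma (γ * k + δ)|⁻¹ ≤ Gamma (1 - (γ * k + δ)) / π := inv_abs_Gamma_le (by linarith)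
    _ ≤ Gamma (1 - (γ * k + δ)) :=
        div_le_self (Gamma_pos_of_pos (by linarith)).le (by linarith [pi_gt_three])
    _ ≤ Gamma (k / 2 + 2) :=
        Gamma_strictMonoOn_Ici.monotoneOn (by simp only [mem_Ici]; linarith)
          (le_add_of_nonneg_left (by positivity) : (2:ℝ) ≤ k / 2 + 2) (by linarith)

end Real

theorem summable_pow_mul_Gamma_half_add_two_div_factorial (R : ℝ) :
    Summable fun k : ℕ ↦ R ^ k * Gamma (k / 2 + 2) / (k ! : ℝ) := by
  refine .of_norm_bounded (g := fun k ↦ ((8 * R ^ 2) ^ k / (k ! : ℝ) + (1 / 4) ^ k) / 2)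
    (((summable_pow_div_factorial _).add
      (summable_geometric_of_lt_one (by norm_num) (by norm_num))).div_const 2) fun k ↦ ?_
  have hG : 0 < Gamma (k / 2 + 2) := Gamma_pos_of_pos (by positivity)
  set a := (2 * |R|) ^ k * Gamma (k / 2 + 2) / (k ! : ℝ)
  -- Only `Γ(k/2+2)²` is controlled, so split `R ^ k = (2R) ^ k * 2 ^ (-k)` and use AM-GM.
  have ha : a ^ 2 ≤ (8 * R ^ 2) ^ k / (k ! : ℝ) := calc
    a ^ 2 = (4 * R ^ 2) ^ k * Gamma (k / 2 + 2) ^ 2 / (k ! : ℝ) ^ 2 := by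
      simp only [a]; rw [div_pow, mul_pow, ← pow_mul, pow_mul', mul_pow, sq_abs]; ring
    _ ≤ (4 * R ^ 2) ^ k * (k + 1)! / (k ! : ℝ) ^ 2 := by
      gcongr; exact Gamma_half_add_two_sq_le_factorial k
    _ = (4 * R ^ 2) ^ k * (k + 1) / (k ! : ℝ) := by
      rw [Nat.factorial_succ]; push_cast; field_simp
    _ ≤ (4 * R ^ 2) ^ k * 2 ^ k / (k ! : ℝ) := by
      gcongr; exact_mod_cast Nat.lt_two_pow_self
    _ = (8 * R ^ 2) ^ k / (k ! : ℝ) := by rw [← mul_pow]; ring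
  calc ‖R ^ k * Gamma (k / 2 + 2) / (k ! : ℝ)‖ = a * (1 / 2) ^ k := by
        rw [norm_div, norm_mul, norm_pow, Real.norm_eq_abs, Real.norm_eq_abs, Real.norm_eq_abs,
          abs_of_pos hG, Nat.abs_cast]
        simp only [a]; rw [mul_pow]; field_simp
        rw [mul_assoc, ← mul_pow]; norm_num
    _ ≤ (a ^ 2 + ((1 / 2) ^ k) ^ 2) / 2 := by nlinarith [sq_nonneg (a - (1 / 2) ^ k)]
    _ ≤ ((8 * R ^ 2) ^ k / (k ! : ℝ) + (1 / 4) ^ k) / 2 := by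
      rw [← pow_mul, pow_mul']; norm_num; linarith

section Wright

variable {γ δ : ℝ} (hγ : -(1 / 2) ≤ γ) (hγ0 : γ < 0) (hδ : -1 ≤ δ)
include hγ hγ0 hδ

theorem summable_pow_div_factorial_mul_abs_Gamma (R : ℝ) :
    Summable fun k : ℕ ↦ R ^ k / (k ! * |Gamma (γ * k + δ)|) := by
  refine .of_norm_bounded_eventually_nat (summable_pow_mul_Gamma_half_add_two_div_factorial |R|) ?_
  filter_upwards [eventually_inv_abs_Gamma_mul_add_le hγ hγ0 hδ] with k hk
  simp only [norm_div, norm_mul, norm_pow, Real.norm_eq_abs, abs_abs, Nat.abs_cast]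
  rw [div_mul_eq_div_div_swap, div_eq_mul_inv _ |_|]
  gcongr

theorem continuous_wrightR : Continuous (wrightR γ δ) := by
  refine continuous_iff_continuousAt.2 fun x ↦ ?_
  have hR : x ∈ Ioo (-(|x| + 1)) (|x| + 1) := abs_lt.1 (lt_add_one |x|)
  refine (continuousOn_tsum (fun k ↦ ((continuous_pow k).div_const _).continuousOn)
    (summable_pow_div_factorial_mul_abs_Gamma hγ hγ0 hδ (|x| + 1)) fun k z hz ↦ ?_).continuousAt
    (Ioo_mem_nhds hR.1 hR.2)
  simp only [norm_div, norm_mul, norm_pow, Real.norm_eq_abs, Nat.abs_cast]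
  exact div_le_div_of_nonneg_right (pow_le_pow_left₀ (abs_nonneg z) (abs_lt.2 hz).le k)
    (by positivity)

end Wright

theorem continuous_erf : Continuous erf :=
  continuous_const.mul (intervalIntegral.continuous_primitive
    (fun _ _ ↦ (by fun_prop : Continuous fun t : ℝ ↦ exp (-t ^ 2)).intervalIntegrable _ _) 0)

theorem erf_zero : erf 0 = 0 := by simp [erf]

theorem strictMono_erf : StrictMono erf := by
  intro a b hab
  have hint : ∀ u v : ℝ, IntervalIntegrable (fun t ↦ exp (-t ^ 2)) MeasureTheory.volume u v :=
    fun u v ↦ (by fun_prop : Continuous fun t : ℝ ↦ exp (-t ^ 2)).intervalIntegrable u v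
  have hpos : 0 < ∫ t in a..b, exp (-t ^ 2) :=
    intervalIntegral.intervalIntegral_pos_of_pos (hint a b) (fun _ ↦ exp_pos _) hab
  rw [← intervalIntegral.integral_interval_sub_left (hint 0 b) (hint 0 a)] at hpos
  unfold erf
  gcongr
  linarith

theorem erf_nonneg {x : ℝ} (hx : 0 ≤ x) : 0 ≤ erf x :=
  erf_zero ▸ strictMono_erf.monotone hx

noncomputable def frontEquationRhs (p : ℝ) : ℝ :=
  p * √π / 2 * exp (p ^ 2 / 4) * erf (p / 2)

theorem continuous_frontEquationRhs : Continuous frontEquationRhs := by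
  have := continuous_erf
  unfold frontEquationRhs
  fun_prop

theorem frontEquationRhs_zero : frontEquationRhs 0 = 0 := by simp [frontEquationRhs]

theorem strictMonoOn_frontEquationRhs : StrictMonoOn frontEquationRhs (Ici 0) := by
  intro x hx y hy hxy
  rw [mem_Ici] at hx hy
  unfold frontEquationRhs
  exact mul_lt_mul'' (mul_lt_mul'' (by gcongr) (by gcongr) (by positivity) (by positivity))
    (strictMono_erf (by linarith)) (by positivity) (erf_nonneg (by linarith))

theorem tendsto_frontEquationRhs_atTop : Tendsto frontEquationRhs atTop atTop := by
  have h1 : 0 < frontEquationRhs 1 :=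
    frontEquationRhs_zero ▸
      strictMonoOn_frontEquationRhs self_mem_Ici (mem_Ici.2 zero_le_one) one_pos
  refine tendsto_atTop_mono' atTop ?_ (tendsto_id.const_mul_atTop h1)
  filter_upwards [eventually_ge_atTop 1] with p hp
  have : (1 : ℝ) ≤ p ^ 2 := one_le_pow₀ hp
  calc frontEquationRhs 1 * id p = p * √π / 2 * exp (1 / 4) * erf (1 / 2) := by
        simp [frontEquationRhs]; ring
    _ ≤ p * √π / 2 * exp (p ^ 2 / 4) * erf (p / 2) := by
        gcongr
        · exact erf_nonneg (by norm_num)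
        · exact strictMono_erf.monotone (by linarith)

theorem existsUnique_pos_eq_of_strictMonoOn {f : ℝ → ℝ} (hcont : ContinuousOn f (Ici 0))
    (hmono : StrictMonoOn f (Ici 0)) (h0 : f 0 = 0) (htop : Tendsto f atTop atTop) {y : ℝ}
    (hy : 0 < y) : ∃! p, 0 < p ∧ y = f p := by
  obtain ⟨b, hb, hb0⟩ := ((htop.eventually_ge_atTop y).and (eventually_ge_atTop 0)).exists
  obtain ⟨p, hp, hfp⟩ := intermediate_value_Icc hb0 (hcont.mono Icc_subset_Ici_self)
    ⟨by rw [h0]; exact hy.le, hb⟩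
  have hp0 : 0 < p := hp.1.lt_of_ne (by rintro rfl; exact hy.ne' (hfp.symm.trans h0))
  refine ⟨p, ⟨hp0, hfp.symm⟩, fun q ⟨hq, hyq⟩ ↦ ?_⟩
  exact hmono.injOn (mem_Ici.2 hq.le) (mem_Ici.2 hp0.le) (hyq ▸ hfp.symm)

/-- Solvability of the transcendental equation for the front coefficient `p`:
the map `p ↦ p Γ(1+α/2) W(-p;-α/2,1-α/2)/(1 - W(-p;-α/2,1))` is continuous on
any interval `(0, p_max)` on which `1 - W(-p;-α/2,1)` does not vanish (this
covers `p_max` the smallest positive zero, or `p_max = ∞` if none exists);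
for `α = 1` it reduces to `G(p) = (p√π/2) e^{p²/4} erf(p/2)`, which is
continuous and strictly increasing on `(0,∞)`, tends to `0` as `p → 0⁺` and to
`∞` as `p → ∞`, so for each `λ > 0` the equation `λ = G(p)` has a unique
positive solution. -/
theorem transcendental_equation_solvability (α : ℝ) (hα : 0 < α) (hα1 : α ≤ 1) :
    (∀ pmax : ℝ,
      (∀ q ∈ Ioo (0:ℝ) pmax, 1 - wrightR (-(α/2)) 1 (-q) ≠ 0) →
      ContinuousOn (fun p : ℝ =>
          p * Real.Gamma (1 + α/2) * wrightR (-(α/2)) (1 - α/2) (-p) /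
            (1 - wrightR (-(α/2)) 1 (-p)))
        (Ioo 0 pmax)) ∧
    (α = 1 →
      (ContinuousOn
          (fun p : ℝ => p * Real.sqrt Real.pi / 2 * Real.exp (p^2/4) * erf (p/2))
          (Ioi 0) ∧
        StrictMonoOn
          (fun p : ℝ => p * Real.sqrt Real.pi / 2 * Real.exp (p^2/4) * erf (p/2))
          (Ioi 0) ∧
        Tendsto (fun p : ℝ => p * Real.sqrt Real.pi / 2 * Real.exp (p^2/4) * erf (p/2))
          (nhdsWithin 0 (Ioi 0)) (nhds 0) ∧
        Tendsto (fun p : ℝ => p * Real.sqrt Real.pi / 2 * Real.exp (p^2/4) * erf (p/2))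
          atTop atTop ∧
        ∀ lam : ℝ, 0 < lam → ∃! p : ℝ, 0 < p ∧
          lam = p * Real.sqrt Real.pi / 2 * Real.exp (p^2/4) * erf (p/2))) := by
  have hγ : -(1 / 2) ≤ -(α / 2) := by linarith
  have hγ0 : -(α / 2) < 0 := by linarith
  have hW := continuous_wrightR hγ hγ0 (by linarith : (-1 : ℝ) ≤ 1)
  have hW' := continuous_wrightR hγ hγ0 (by linarith : -1 ≤ 1 - α / 2)
  refine ⟨fun pmax hne ↦ ContinuousOn.div (by fun_prop) (by fun_prop) hne, fun _ ↦ ?_⟩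
  have hzero : Tendsto frontEquationRhs (𝓝[>] 0) (𝓝 0) :=
    (continuous_frontEquationRhs.tendsto' 0 0 frontEquationRhs_zero).mono_left nhdsWithin_le_nhds
  exact ⟨continuous_frontEquationRhs.continuousOn,
    strictMonoOn_frontEquationRhs.mono Ioi_subset_Ici_self, hzero, tendsto_frontEquationRhs_atTop,
    fun _ ↦ existsUnique_pos_eq_of_strictMonoOn continuous_frontEquationRhs.continuousOn
      strictMonoOn_frontEquationRhs frontEquationRhs_zero tendsto_frontEquationRhs_atTop⟩
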